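/- arXiv:1905.09712 — 3 statements merged into one kernel-verified Lean document; each statement's English description precedes it below -/
import Mathlib

section
/- Under the setting of the previous statement, if there exists k₀ with 1 < B_{k₀}(μ) < B^max (the clamp is inactive for device k₀), then the unclipped value satisfies 1 < (ΔL·E·V_{k₀} − √(ΔL·s·T_f·μ/(ρ_{k₀}·R_{k₀}))·V_{k₀}) < B^max, which implies min_k (ΔL·V_k·E − B^max)²·ρ_k·R_k/(ΔL·s·T_f·V_k²) ≤ μ ≤ max_k (ΔL·V_k·E − 1)²·ρ_k·R_k/(ΔL·s·T_f·V_k²), provided ΔL·V_{k₀}·E > B^max for the lower bound and ΔL·V_{k₀}·E > 1 for the upper bound. -/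
open Set

/-- Corollary 2: if some device's clipped optimal batchsize is strictly between 1 and
B^max, the unclipped value lies in (1, B^max), yielding bounds on the multiplier μ. -/
theorem mu_bounds (K : ℕ) (hK : 1 ≤ K)
    (ΔL s Tf E Bmax μ : ℝ) (hΔL : 0 < ΔL) (hs : 0 < s) (hTf : 0 < Tf)
    (hE : 0 < E) (hBmax : 1 < Bmax) (hμ : 0 < μ)
    (V ρ R : Fin K → ℝ) (hV : ∀ k, 0 < V k) (hρ : ∀ k, 0 < ρ k) (hR : ∀ k, 0 < R k)
    (k₀ : Fin K)
    (h₁ : 1 < min Bmax (max 1 ((ΔL * E - Real.sqrt (ΔL * s * Tf * μ / (ρ k₀ * R k₀))) * V k₀)))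
    (h₂ : min Bmax (max 1 ((ΔL * E - Real.sqrt (ΔL * s * Tf * μ / (ρ k₀ * R k₀))) * V k₀)) < Bmax) :
    (1 < (ΔL * E - Real.sqrt (ΔL * s * Tf * μ / (ρ k₀ * R k₀))) * V k₀ ∧
      (ΔL * E - Real.sqrt (ΔL * s * Tf * μ / (ρ k₀ * R k₀))) * V k₀ < Bmax) ∧
    (Bmax < ΔL * V k₀ * E →
      (⨅ k : Fin K, (ΔL * V k * E - Bmax) ^ 2 * ρ k * R k / (ΔL * s * Tf * (V k) ^ 2)) ≤ μ) ∧
    (1 < ΔL * V k₀ * E →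
      μ ≤ ⨆ k : Fin K, (ΔL * V k * E - 1) ^ 2 * ρ k * R k / (ΔL * s * Tf * (V k) ^ 2)) := by
  haveI : Nonempty (Fin K) := ⟨⟨0, hK⟩⟩
  have hρR : 0 < ρ k₀ * R k₀ := mul_pos (hρ k₀) (hR k₀)
  set q := ΔL * s * Tf * μ / (ρ k₀ * R k₀) with hq
  have hqpos : 0 < q := div_pos (by positivity) hρR
  set x := (ΔL * E - Real.sqrt q) * V k₀ with hx
  have hx1 : 1 < x := by
    have h := lt_of_lt_of_le h₁ (min_le_right _ _)
    rcases lt_max_iff.mp h with h | h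
    · exact absurd h (lt_irrefl 1)
    · exact h
  have hxB : x < Bmax := by
    have hmax : max 1 x = x := max_eq_right (le_of_lt hx1)
    rw [hmax] at h₂
    rcases lt_or_ge x Bmax with h | h
    · exact h
    · rw [min_eq_left h] at h₂; linarith
  have hsqrt : Real.sqrt q * Real.sqrt q = q := Real.mul_self_sqrt hqpos.le
  have h3 : q * (V k₀) ^ 2 * (ρ k₀ * R k₀) = ΔL * s * Tf * μ * (V k₀) ^ 2 := by
    rw [hq]; field_simp; exact mul_div_cancel_left₀ _ hρR.ne'
  have hVk := hV k₀
  refine ⟨⟨hx1, hxB⟩, ?_, ?_⟩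
  · intro hB
    have hkey : (ΔL * V k₀ * E - Bmax) ^ 2 * ρ k₀ * R k₀ / (ΔL * s * Tf * (V k₀) ^ 2) ≤ μ := by
      have h1 : ΔL * V k₀ * E - Bmax < Real.sqrt q * V k₀ := by nlinarith [hxB]
      have h2 : (ΔL * V k₀ * E - Bmax) ^ 2 ≤ q * (V k₀) ^ 2 := by
        nlinarith [Real.sqrt_nonneg q, hsqrt, sub_pos.mpr hB]
      rw [div_le_iff₀ (by positivity)]
      nlinarith [mul_le_mul_of_nonneg_right h2 hρR.le, h3]
    have hbdd : BddBelow (Set.range fun k : Fin K =>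
        (ΔL * V k * E - Bmax) ^ 2 * ρ k * R k / (ΔL * s * Tf * (V k) ^ 2)) :=
      Set.Finite.bddBelow (Set.finite_range _)
    exact le_trans (ciInf_le hbdd k₀) hkey
  · intro h1'
    have hkey : μ ≤ (ΔL * V k₀ * E - 1) ^ 2 * ρ k₀ * R k₀ / (ΔL * s * Tf * (V k₀) ^ 2) := by
      have h1 : Real.sqrt q * V k₀ < ΔL * V k₀ * E - 1 := by nlinarith [hx1]
      have h2 : q * (V k₀) ^ 2 ≤ (ΔL * V k₀ * E - 1) ^ 2 := by
        nlinarith [Real.sqrt_nonneg q, hsqrt, mul_nonneg (Real.sqrt_nonneg q) hVk.le]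
      rw [le_div_iff₀ (by positivity)]
      nlinarith [mul_le_mul_of_nonneg_right h2 hρR.le, h3]
    have hbdd : BddAbove (Set.range fun k : Fin K =>
        (ΔL * V k * E - 1) ^ 2 * ρ k * R k / (ΔL * s * Tf * (V k) ^ 2)) :=
      Set.Finite.bddAbove (Set.finite_range _)
    exact le_trans hkey (le_ciSup hbdd k₀)
end

section
/- Let K ≥ 1, B > 0, C > 0, f_k > 0, s > 0, R_k > 0, ΔL > 0, and set ρ_k = f_k/Σ_j f_j. Consider the relaxed problem: minimize over b ∈ ℝ_{≥0}^K and τ ∈ ℝ_{>0}^K with Σ_k b_k = B and Σ_k τ_k ≤ 1 the quantity max_k (b_k·C/f_k + s/(τ_k·R_k))/ΔL. Then the optimal value is at least (B·C/Σ_k f_k + s·(Σ_k √(ρ_k/R_k))²)/ΔL. -/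
open Finset

/-- Lower bound of Corollary 1 (infinite-memory relaxation): every feasible point of
the relaxed min-max uplink problem has objective at least the KKT value. -/
theorem EU_lower_bound (K : ℕ) (hK : 1 ≤ K)
    (B C s ΔL : ℝ) (hB : 0 < B) (hC : 0 < C) (hs : 0 < s) (hΔL : 0 < ΔL)
    (f R : Fin K → ℝ) (hf : ∀ k, 0 < f k) (hR : ∀ k, 0 < R k) :
    ∀ b τ : Fin K → ℝ, (∀ k, 0 ≤ b k) → (∀ k, 0 < τ k) →
      (∑ k, b k = B) → (∑ k, τ k ≤ 1) →
      (B * C / (∑ k, f k)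
          + s * (∑ k, Real.sqrt ((f k / ∑ j, f j) / R k)) ^ 2) / ΔL
        ≤ ⨆ k : Fin K, (b k * C / f k + s / (τ k * R k)) / ΔL := by
  intro b τ hb hτ hsumb hsumτ
  have hKne : Nonempty (Fin K) := ⟨⟨0, hK⟩⟩
  set F := ∑ j, f j with hF
  have hFpos : 0 < F := Finset.sum_pos (fun k _ => hf k) univ_nonempty
  set g : Fin K → ℝ := fun k => b k * C / f k + s / (τ k * R k) with hg
  obtain ⟨k₀, hk₀⟩ : ∃ k₀, ∀ k, g k ≤ g k₀ := Finite.exists_max g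
  have hbdd : BddAbove (Set.range fun k => g k / ΔL) :=
    (Set.finite_range _).bddAbove
  have hle : g k₀ / ΔL ≤ ⨆ k, g k / ΔL := le_ciSup hbdd k₀
  refine le_trans ?_ hle
  gcongr
  · -- reduces to the core inequality
    have key1 : ∑ k, (f k / F) * g k ≤ g k₀ := by
      calc ∑ k, (f k / F) * g k ≤ ∑ k, (f k / F) * g k₀ := by
            apply Finset.sum_le_sum
            intro k _
            exact mul_le_mul_of_nonneg_left (hk₀ k) (div_nonneg (hf k).le hFpos.le)
        _ = g k₀ := by
            rw [← Finset.sum_mul]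
            have h1 : ∑ k, f k / F = 1 := by
              rw [← Finset.sum_div, div_self hFpos.ne']
            rw [h1, one_mul]
    refine le_trans ?_ key1
    have expand : ∑ k, (f k / F) * g k
        = B * C / F + s * ∑ k, (f k / F) / (τ k * R k) := by
      simp only [hg, mul_add]
      rw [Finset.sum_add_distrib, Finset.mul_sum]
      congr 1
      · rw [← hsumb, Finset.sum_mul, Finset.sum_div]
        apply Finset.sum_congr rfl
        intro k _
        have := (hf k).ne'
        field_simp
      · apply Finset.sum_congr rfl
        intro k _
        field_simp
    rw [expand]
    gcongr
    -- Cauchy–Schwarz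
    have h1 : ∀ k : Fin K, Real.sqrt ((f k / F) / R k)
        = Real.sqrt ((f k / F) / (τ k * R k)) * Real.sqrt (τ k) := by
      intro k
      rw [← Real.sqrt_mul (div_nonneg (div_nonneg (hf k).le hFpos.le) (mul_pos (hτ k) (hR k)).le)]
      congr 1
      symm
      rw [div_mul_eq_mul_div, mul_comm (f k / F) (τ k), mul_div_mul_left _ _ (hτ k).ne']
    calc (∑ k, Real.sqrt ((f k / F) / R k)) ^ 2
        = (∑ k, Real.sqrt ((f k / F) / (τ k * R k)) * Real.sqrt (τ k)) ^ 2 := by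
          simp_rw [h1]
      _ ≤ (∑ k, Real.sqrt ((f k / F) / (τ k * R k)) ^ 2) * (∑ k, Real.sqrt (τ k) ^ 2) :=
          Finset.sum_mul_sq_le_sq_mul_sq _ _ _
      _ = (∑ k, (f k / F) / (τ k * R k)) * (∑ k, τ k) := by
          congr 1
          · apply Finset.sum_congr rfl
            intro k _
            exact Real.sq_sqrt (div_nonneg (div_nonneg (hf k).le hFpos.le) (mul_pos (hτ k) (hR k)).le)
          · apply Finset.sum_congr rfl
            intro k _
            exact Real.sq_sqrt (hτ k).le
      _ ≤ (∑ k, (f k / F) / (τ k * R k)) * 1 := by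
          gcongr
          apply Finset.sum_nonneg
          intro k _
          exact div_nonneg (div_nonneg (hf k).le hFpos.le) (mul_pos (hτ k) (hR k)).le
      _ = ∑ k, (f k / F) / (τ k * R k) := mul_one _
end

section
/- Consider the GPU-scenario objective E(B₁,…,B_K) = ξ·√(Σ_k B_k) / (max_k (t_k^G(B_k) + u_k) + D), where ξ > 0, u_k ≥ 0, D ≥ 0 are constants and each t_k^G is the piecewise function of Assumption 1 with threshold B_k^th < B^max. If B* = (B₁*,…,B_K*) maximizes E over [1, B^max]^K and B_{k₀}* < B_{k₀}^th for some k₀, then the point B' obtained by replacing B_{k₀}* with B_{k₀}^th satisfies E(B') > E(B*), a contradiction; hence every maximizer satisfies B_k* ≥ B_k^th for all k. -/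
/-! Raising a batchsize that lies below its threshold up to the threshold leaves the latency of
that device, hence the maximum in the denominator, unchanged, while the numerator `ξ √(Σ Bₖ)`
strictly grows. So a maximizer cannot have any batchsize below its threshold. -/

open Set Function

theorem iSup_update_congr {ι α β : Type*} [DecidableEq ι] [SupSet β] (f : ι → α → β)
    (B : ι → α) {i : ι} {y : α} (h : f i y = f i (B i)) :
    ⨆ k, f k (update B i y k) = ⨆ k, f k (B k) := by
  refine iSup_congr fun k => ?_
  rcases eq_or_ne k i with rfl | hk
  · rwa [update_self]
  · rw [update_of_ne hk]

theorem Finset.sum_lt_sum_update {ι M : Type*} [Fintype ι] [DecidableEq ι]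
    [AddCommMonoid M] [PartialOrder M] [IsOrderedCancelAddMonoid M]
    (B : ι → M) {i : ι} {y : M} (h : B i < y) :
    ∑ k, B k < ∑ k, update B i y k := by
  refine Finset.sum_lt_sum (fun k _ => ?_) ⟨i, Finset.mem_univ i, by rwa [update_self]⟩
  rcases eq_or_ne k i with rfl | hk
  · rw [update_self]; exact h.le
  · rw [update_of_ne hk]

theorem gpu_optimal_batchsize_compute_bound_general (K : ℕ)
    (ξ D Bmax : ℝ) (hξ : 0 < ξ) (hD : 0 ≤ D)
    (tℓ c th u : Fin K → ℝ)
    (htℓ : ∀ k, 0 < tℓ k)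
    (hth : ∀ k, 1 ≤ th k) (hthmax : ∀ k, th k < Bmax)
    (hu : ∀ k, 0 ≤ u k)
    (tG : Fin K → ℝ → ℝ)
    (htG : ∀ k x, tG k x = if x ≤ th k then tℓ k else c k * (x - th k) + tℓ k)
    (E : (Fin K → ℝ) → ℝ)
    (hEdef : ∀ B : Fin K → ℝ,
      E B = ξ * Real.sqrt (∑ k, B k) / ((⨆ k : Fin K, (tG k (B k) + u k)) + D))
    (Bstar : Fin K → ℝ) (hbox : ∀ k, Bstar k ∈ Icc (1 : ℝ) Bmax)
    (hmax : ∀ B : Fin K → ℝ, (∀ k, B k ∈ Icc (1 : ℝ) Bmax) → E B ≤ E Bstar) :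
    ∀ k, th k ≤ Bstar k := by
  intro k₀
  by_contra! hlt
  set B' := update Bstar k₀ (th k₀)
  have hbox' : ∀ k, B' k ∈ Icc (1 : ℝ) Bmax :=
    (forall_update_iff Bstar fun k b => b ∈ Icc (1 : ℝ) Bmax).2
      ⟨⟨hth k₀, (hthmax k₀).le⟩, fun k _ => hbox k⟩
  have ht : tG k₀ (Bstar k₀) = tℓ k₀ := by rw [htG, if_pos hlt.le]
  have hden : ⨆ k, (tG k (B' k) + u k) = ⨆ k, (tG k (Bstar k) + u k) :=
    iSup_update_congr (fun k b => tG k b + u k) Bstar (by rw [ht, htG, if_pos le_rfl])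
  have hden_pos : 0 < (⨆ k, (tG k (Bstar k) + u k)) + D := by
    have hk₀ : tG k₀ (Bstar k₀) + u k₀ ≤ ⨆ k, (tG k (Bstar k) + u k) :=
      le_ciSup (finite_range fun k => tG k (Bstar k) + u k).bddAbove k₀
    linarith [htℓ k₀, hu k₀]
  have hsum_nonneg : 0 ≤ ∑ k, Bstar k :=
    Finset.sum_nonneg fun k _ => zero_le_one.trans (hbox k).1
  have hE : E Bstar < E B' := by
    rw [hEdef, hEdef, hden]
    gcongr ξ * √?_ / _
    exact Finset.sum_lt_sum_update Bstar hlt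
  exact (hmax B' hbox').not_gt hE

/-- Lemma 2: in the GPU scenario, every maximizer of the learning efficiency over the
batchsize box has every device's batchsize in the compute-bound region. -/
theorem gpu_optimal_batchsize_compute_bound (K : ℕ) (hK : 1 ≤ K)
    (ξ D Bmax : ℝ) (hξ : 0 < ξ) (hD : 0 ≤ D) (hBmax : 1 < Bmax)
    (tℓ c th u : Fin K → ℝ)
    (htℓ : ∀ k, 0 < tℓ k) (hc : ∀ k, 0 < c k)
    (hth : ∀ k, 1 ≤ th k) (hthmax : ∀ k, th k < Bmax)
    (hu : ∀ k, 0 ≤ u k)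
    (tG : Fin K → ℝ → ℝ)
    (htG : ∀ k x, tG k x = if x ≤ th k then tℓ k else c k * (x - th k) + tℓ k)
    (E : (Fin K → ℝ) → ℝ)
    (hEdef : ∀ B : Fin K → ℝ,
      E B = ξ * Real.sqrt (∑ k, B k) / ((⨆ k : Fin K, (tG k (B k) + u k)) + D))
    (Bstar : Fin K → ℝ) (hbox : ∀ k, Bstar k ∈ Icc (1 : ℝ) Bmax)
    (hmax : ∀ B : Fin K → ℝ, (∀ k, B k ∈ Icc (1 : ℝ) Bmax) → E B ≤ E Bstar) :
    ∀ k, th k ≤ Bstar k :=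
  gpu_optimal_batchsize_compute_bound_general K ξ D Bmax hξ hD tℓ c th u htℓ hth hthmax hu tG htG E
    hEdef Bstar hbox hmax
end
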